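/- arXiv:2003.01239 — 2 statements merged into one kernel-verified Lean document; each statement's English description precedes it below -/
import Mathlib

section
/- Let f be (μ,ρ)-strongly concave on a region containing θ, θ+σg*, θ+σg', where ‖g*‖=‖g'‖=√d. Suppose f(θ+σg*) ≥ f(θ+σg') - 2Λ, and the angle between g' and v=∇f(θ) is β₂ while the angle between g* and v is β₁, with cos(β₂) - cos(β₁) ≥ τ > 0. Then ‖v‖ ≤ ((ρ-μ)/(2τ))·√d·σ + 2Λ/(στ√d). -/
/-!
Strong concavity at `θ` traps `f(θ + h) - f(θ) - ⟪∇f θ, h⟫` between `-ρ‖h‖²/2` and `-μ‖h‖²/2`.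
Applied to the two steps `h = σ g*`, `h = σ g'` of equal length `σ √d`, the near-optimality of
`g*` bounds `σ ⟪∇f θ, g' - g*⟫` by `(ρ - μ) σ² d / 2 + 2Λ`, while the cosine gap bounds it below
by `σ τ √d ‖∇f θ‖`.
-/

open RealInnerProductSpace

section QuadraticBounds

variable {E : Type*} [NormedAddCommGroup E] [InnerProductSpace ℝ E]

theorem inner_sub_le_of_quadratic_bounds {f : E → ℝ} {B : Set E} {x v h₁ h₂ : E}
    {r μ ρ Λ : ℝ}
    (hupper : ∀ y ∈ B, f y ≤ f x + ⟪v, y - x⟫ - μ / 2 * ‖y - x‖ ^ 2)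
    (hlower : ∀ y ∈ B, f y ≥ f x + ⟪v, y - x⟫ - ρ / 2 * ‖y - x‖ ^ 2)
    (hx₁ : x + h₁ ∈ B) (hx₂ : x + h₂ ∈ B) (hh₁ : ‖h₁‖ = r) (hh₂ : ‖h₂‖ = r)
    (hmax : f (x + h₁) ≥ f (x + h₂) - 2 * Λ) :
    ⟪v, h₂ - h₁⟫ ≤ (ρ - μ) / 2 * r ^ 2 + 2 * Λ := by
  have h₁_le := hupper _ hx₁
  have h₂_ge := hlower _ hx₂
  rw [add_sub_cancel_left, hh₁] at h₁_le
  rw [add_sub_cancel_left, hh₂] at h₂_ge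
  rw [inner_sub_right]
  linarith

end QuadraticBounds

/-- The junk value `x / 0 = 0` is what rules out `c = 0`. -/
theorem pos_and_mul_le_sub_of_le_div_sub_div {a b c τ : ℝ} (hτ : 0 < τ) (hc : 0 ≤ c)
    (h : τ ≤ a / c - b / c) : 0 < c ∧ τ * c ≤ a - b := by
  rw [div_sub_div_same] at h
  obtain hc0 | hc_pos := hc.eq_or_lt
  · subst hc0
    rw [div_zero] at h
    exact absurd h hτ.not_ge
  · exact ⟨hc_pos, (le_div_iff₀ hc_pos).1 h⟩

theorem gradient_norm_bound_of_hill_climbing_general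
    (d : ℕ) (f : EuclideanSpace ℝ (Fin d) → ℝ)
    (B : Set (EuclideanSpace ℝ (Fin d)))
    (θ gstar g' : EuclideanSpace ℝ (Fin d))
    (σ Λ μ ρ τ : ℝ) (hσ : 0 < σ) (hτ : 0 < τ)
    (hθ : θ ∈ B) (hθg : θ + σ • gstar ∈ B) (hθg' : θ + σ • g' ∈ B)
    (hng : ‖gstar‖ = Real.sqrt d) (hng' : ‖g'‖ = Real.sqrt d)
    (v : EuclideanSpace ℝ (Fin d)) (hv : v = gradient f θ)
    (hupper : ∀ x ∈ B, ∀ y ∈ B,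
      f y ≤ f x + inner ℝ (gradient f x) (y - x) - μ / 2 * ‖y - x‖ ^ 2)
    (hlower : ∀ x ∈ B, ∀ y ∈ B,
      f y ≥ f x + inner ℝ (gradient f x) (y - x) - ρ / 2 * ‖y - x‖ ^ 2)
    (hmax : f (θ + σ • gstar) ≥ f (θ + σ • g') - 2 * Λ)
    (hangle : (inner ℝ g' v : ℝ) / (‖g'‖ * ‖v‖) - (inner ℝ gstar v : ℝ) / (‖gstar‖ * ‖v‖) ≥ τ) :
    ‖v‖ ≤ (ρ - μ) / (2 * τ) * Real.sqrt d * σ + 2 * Λ / (σ * τ * Real.sqrt d) := by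
  subst hv
  set s := Real.sqrt d
  have hstep : ∀ g : EuclideanSpace ℝ (Fin d), ‖g‖ = s → ‖σ • g‖ = σ * s := fun g hg => by
    rw [norm_smul, hg, Real.norm_of_nonneg hσ.le]
  have hconcave := inner_sub_le_of_quadratic_bounds (hupper θ hθ) (hlower θ hθ) hθg hθg'
    (hstep gstar hng) (hstep g' hng') hmax
  rw [← smul_sub, inner_smul_right] at hconcave
  rw [hng, hng'] at hangle
  obtain ⟨hsv, hcos⟩ := pos_and_mul_le_sub_of_le_div_sub_div hτ (by positivity) hangle
  rw [← inner_sub_left, real_inner_comm] at hcos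
  have hs : 0 < s := pos_of_mul_pos_left hsv (norm_nonneg _)
  have hkey : σ * τ * s * ‖gradient f θ‖ ≤ (ρ - μ) / 2 * (σ * s) ^ 2 + 2 * Λ :=
    calc σ * τ * s * ‖gradient f θ‖ = σ * (τ * (s * ‖gradient f θ‖)) := by ring
      _ ≤ σ * ⟪gradient f θ, g' - gstar⟫ := mul_le_mul_of_nonneg_left hcos hσ.le
      _ ≤ _ := hconcave
  have hrhs : (ρ - μ) / (2 * τ) * s * σ + 2 * Λ / (σ * τ * s)
      = ((ρ - μ) / 2 * (σ * s) ^ 2 + 2 * Λ) / (σ * τ * s) := by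
    field_simp
  rw [hrhs, le_div_iff₀ (by positivity)]
  linarith

theorem gradient_norm_bound_of_hill_climbing
    (d : ℕ) (f : EuclideanSpace ℝ (Fin d) → ℝ)
    (B : Set (EuclideanSpace ℝ (Fin d))) (hB : IsOpen B) (hBc : Convex ℝ B)
    (θ gstar g' : EuclideanSpace ℝ (Fin d))
    (σ Λ μ ρ τ : ℝ) (hσ : 0 < σ) (hΛ : 0 ≤ Λ) (hμ : 0 < μ) (hμρ : μ < ρ) (hτ : 0 < τ)
    (hf : Differentiable ℝ f)
    (hθ : θ ∈ B) (hθg : θ + σ • gstar ∈ B) (hθg' : θ + σ • g' ∈ B)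
    (hng : ‖gstar‖ = Real.sqrt d) (hng' : ‖g'‖ = Real.sqrt d)
    (v : EuclideanSpace ℝ (Fin d)) (hv : v = gradient f θ) (hv0 : v ≠ 0)
    (hupper : ∀ x ∈ B, ∀ y ∈ B,
      f y ≤ f x + inner ℝ (gradient f x) (y - x) - μ / 2 * ‖y - x‖ ^ 2)
    (hlower : ∀ x ∈ B, ∀ y ∈ B,
      f y ≥ f x + inner ℝ (gradient f x) (y - x) - ρ / 2 * ‖y - x‖ ^ 2)
    (hmax : f (θ + σ • gstar) ≥ f (θ + σ • g') - 2 * Λ)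
    (hangle : (inner ℝ g' v : ℝ) / (‖g'‖ * ‖v‖) - (inner ℝ gstar v : ℝ) / (‖gstar‖ * ‖v‖) ≥ τ) :
    ‖v‖ ≤ (ρ - μ) / (2 * τ) * Real.sqrt d * σ + 2 * Λ / (σ * τ * Real.sqrt d) :=
  gradient_norm_bound_of_hill_climbing_general d f B θ gstar g' σ Λ μ ρ τ hσ hτ hθ hθg hθg' hng hng'
    v hv hupper hlower hmax hangle
end

section
/- For all φ with 0 ≤ φ ≤ 1, cos(φ) - cos(2φ) ≥ (3/2)φ² - (5/8)φ⁴. -/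
/-!
Write `cos (2φ) = 2 cos² φ - 1` and squeeze `cos φ` between its Taylor polynomials of degrees 6
and 4; these alternating bounds come from integrating `x - x³/6 ≤ sin x` three times. What is
left is the polynomial inequality `59/720 φ⁶ - φ⁸/288 ≥ 0`, true for `φ² ≤ 1`.
-/

open Real

theorem le_of_hasDerivAt_le {f g f' g' : ℝ → ℝ} {a x : ℝ}
    (hf : ∀ t, HasDerivAt f (f' t) t) (hg : ∀ t, HasDerivAt g (g' t) t)
    (ha : f a ≤ g a) (hle : ∀ t, a ≤ t → f' t ≤ g' t) (hx : a ≤ x) : f x ≤ g x :=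
  image_le_of_deriv_right_le_deriv_boundary (fun t _ ↦ (hf t).continuousAt.continuousWithinAt)
    (fun t _ ↦ (hf t).hasDerivWithinAt) ha (fun t _ ↦ (hg t).continuousAt.continuousWithinAt)
    (fun t _ ↦ (hg t).hasDerivWithinAt) (fun t ht ↦ hle t ht.1) ⟨hx, le_rfl⟩

namespace Real

theorem cos_le_quartic_taylor (x : ℝ) : cos x ≤ 1 - x ^ 2 / 2 + x ^ 4 / 24 := by
  wlog hx : 0 ≤ x generalizing x
  · simpa [Even.neg_pow, Nat.even_iff] using this (-x) (by linarith)
  refine le_of_hasDerivAt_le (f := cos) (g := fun t ↦ 1 - t ^ 2 / 2 + t ^ 4 / 24)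
    (f' := fun t ↦ -sin t) (g' := fun t ↦ -t + t ^ 3 / 6)
    hasDerivAt_cos (fun t ↦ ?_) (by simp) (fun t ht ↦ ?_) hx
  · exact (HasDerivAt.add (((hasDerivAt_pow 2 t).div_const 2).const_sub 1)
      ((hasDerivAt_pow 4 t).div_const 24)).congr_deriv (by norm_num; ring)
  · linarith [sin_ge_sub_cube ht]

theorem sin_le_quintic_taylor {x : ℝ} (hx : 0 ≤ x) : sin x ≤ x - x ^ 3 / 6 + x ^ 5 / 120 := by
  refine le_of_hasDerivAt_le (g := fun t ↦ t - t ^ 3 / 6 + t ^ 5 / 120)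
    (g' := fun t ↦ 1 - t ^ 2 / 2 + t ^ 4 / 24)
    hasDerivAt_sin (fun t ↦ ?_) (by simp) (fun t _ ↦ cos_le_quartic_taylor t) hx
  exact (HasDerivAt.add ((hasDerivAt_id t).sub ((hasDerivAt_pow 3 t).div_const 6))
    ((hasDerivAt_pow 5 t).div_const 120)).congr_deriv (by norm_num; ring)

theorem sextic_taylor_le_cos (x : ℝ) : 1 - x ^ 2 / 2 + x ^ 4 / 24 - x ^ 6 / 720 ≤ cos x := by
  wlog hx : 0 ≤ x generalizing x
  · simpa [Even.neg_pow, Nat.even_iff] using this (-x) (by linarith)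
  refine le_of_hasDerivAt_le (f := fun t ↦ 1 - t ^ 2 / 2 + t ^ 4 / 24 - t ^ 6 / 720)
    (f' := fun t ↦ -t + t ^ 3 / 6 - t ^ 5 / 120) (g' := fun t ↦ -sin t)
    (fun t ↦ ?_) hasDerivAt_cos (by simp) (fun t ht ↦ ?_) hx
  · exact (HasDerivAt.sub (HasDerivAt.add (((hasDerivAt_pow 2 t).div_const 2).const_sub 1)
      ((hasDerivAt_pow 4 t).div_const 24)) ((hasDerivAt_pow 6 t).div_const 720)).congr_deriv
      (by norm_num; ring)
  · linarith [sin_le_quintic_taylor ht]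

end Real

theorem cos_diff_lower_bound (φ : ℝ) (h0 : 0 ≤ φ) (h1 : φ ≤ 1) :
    Real.cos φ - Real.cos (2 * φ) ≥ 3 / 2 * φ ^ 2 - 5 / 8 * φ ^ 4 := by
  have hcos_nonneg : 0 ≤ cos φ :=
    cos_nonneg_of_mem_Icc ⟨by linarith [pi_pos], by linarith [pi_gt_three]⟩
  have hsq : cos φ ^ 2 ≤ (1 - φ ^ 2 / 2 + φ ^ 4 / 24) ^ 2 :=
    pow_le_pow_left₀ hcos_nonneg (cos_le_quartic_taylor φ) 2
  have hφ : 0 ≤ φ ^ 6 * (1 - φ ^ 2) :=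
    mul_nonneg (pow_nonneg h0 6) (sub_nonneg.2 (pow_le_one₀ h0 h1))
  rw [cos_two_mul]
  linarith [sextic_taylor_le_cos φ, pow_nonneg h0 6]
end
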